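/- arXiv:1107.1112 — 6 statements merged into one kernel-verified Lean document; each statement's English description precedes it below -/
import Mathlib

section
/- Suppose β₁ = −1 + k₁α₁ and β₂ = ε + k₂α₂ for some ε ∈ {1,−1} and some integers k₁, k₂. Then for every integer b, the identity w(−1, b, 0, −b − k₁ − k₂) = η₂^{ε} holds in G. -/
/- The group `G = ⟨c₁, c₂, h ∣ [c₁,h], [c₂,h], c₁^{α₁}h^{β₁}, c₂^{α₂}h^{β₂}⟩`,
the fundamental group of the Seifert fibered space `D(β₁/α₁, β₂/α₂)`. -/
def seifertRels (α₁ α₂ β₁ β₂ : ℤ) : Set (FreeGroup (Fin 3)) :=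
  {FreeGroup.of 0 * FreeGroup.of 2 * (FreeGroup.of 0)⁻¹ * (FreeGroup.of 2)⁻¹,
   FreeGroup.of 1 * FreeGroup.of 2 * (FreeGroup.of 1)⁻¹ * (FreeGroup.of 2)⁻¹,
   FreeGroup.of 0 ^ α₁ * FreeGroup.of 2 ^ β₁,
   FreeGroup.of 1 ^ α₂ * FreeGroup.of 2 ^ β₂}

abbrev SeifertGroup (α₁ α₂ β₁ β₂ : ℤ) := PresentedGroup (seifertRels α₁ α₂ β₁ β₂)

variable (α₁ α₂ β₁ β₂ : ℤ)

/-- The generator `c₁`. -/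
def c₁ : SeifertGroup α₁ α₂ β₁ β₂ := PresentedGroup.of 0

/-- The generator `c₂`. -/
def c₂ : SeifertGroup α₁ α₂ β₁ β₂ := PresentedGroup.of 1

/-- The generator `h` (a regular fiber). -/
def hGen : SeifertGroup α₁ α₂ β₁ β₂ := PresentedGroup.of 2

/-- The class `η₁ = c₁^{γ₁} h^{δ₁}` of the first exceptional fiber. -/
def η₁ (γ₁ δ₁ : ℤ) : SeifertGroup α₁ α₂ β₁ β₂ :=
  c₁ α₁ α₂ β₁ β₂ ^ γ₁ * hGen α₁ α₂ β₁ β₂ ^ δ₁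

/-- The class `η₂ = c₂^{γ₂} h^{δ₂}` of the second exceptional fiber. -/
def η₂ (γ₂ δ₂ : ℤ) : SeifertGroup α₁ α₂ β₁ β₂ :=
  c₂ α₁ α₂ β₁ β₂ ^ γ₂ * hGen α₁ α₂ β₁ β₂ ^ δ₂

/-- The word `w(a,b,c,d) = (c₁c₂)^a h^b · η₁ · (c₁c₂)^c h^d`. -/
def w (γ₁ δ₁ a b c d : ℤ) : SeifertGroup α₁ α₂ β₁ β₂ :=
  (c₁ α₁ α₂ β₁ β₂ * c₂ α₁ α₂ β₁ β₂) ^ a * hGen α₁ α₂ β₁ β₂ ^ b *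
    η₁ α₁ α₂ β₁ β₂ γ₁ δ₁ *
    (c₁ α₁ α₂ β₁ β₂ * c₂ α₁ α₂ β₁ β₂) ^ c * hGen α₁ α₂ β₁ β₂ ^ d

/-! Since `c^α = h^{-β}`, a power `c^γ` only depends on `γ` modulo `α` up to a power of `h`.
When `β = -ε + kα` with `ε = ±1`, the determinant condition forces `γ ≡ ε (mod α)`, and the
fibre class collapses to `c^γ h^δ = c^ε h^{εk}`. Hence `η₁ = c₁ h^{k₁}` and
`η₂^{-ε} = c₂ h^{k₂}`; as `h` is central, `w(−1, b, 0, −b − k₁ − k₂)` reduces to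
`c₂⁻¹ h^{-k₂} = (c₂ h^{k₂})⁻¹ = η₂^ε`. -/
theorem zpow_mul_zpow_eq_of_det_eq_one {G : Type*} [Group G] {c h : G} {α β γ δ ε k : ℤ}
    (hc : c ^ α = h ^ (-β)) (hdet : α * δ - β * γ = 1) (hβ : β = -ε + k * α)
    (hε : ε * ε = 1) :
    c ^ γ * h ^ δ = c ^ ε * h ^ (ε * k) := by
  have hγ : γ = ε + α * (ε * (k * γ - δ)) := by
    linear_combination ε * hdet + ε * γ * hβ - γ * hε
  rw [hγ, zpow_add, zpow_mul, hc, ← zpow_mul, mul_assoc, ← zpow_add]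
  congr 2
  linear_combination ε * k * hdet + ε * δ * hβ - δ * hε

theorem zpow_mul_zpow_zpow_eq_of_det_eq_one {G : Type*} [Group G] {c h : G}
    {α β γ δ ε k : ℤ} (hch : Commute c h) (hc : c ^ α = h ^ (-β))
    (hdet : α * δ - β * γ = 1) (hβ : β = -ε + k * α) (hε : ε * ε = 1) :
    (c ^ γ * h ^ δ) ^ ε = c * h ^ k := by
  rw [zpow_mul_zpow_eq_of_det_eq_one hc hdet hβ hε, (hch.zpow_zpow _ _).mul_zpow, ← zpow_mul,
    ← zpow_mul, hε, mul_right_comm, hε, zpow_one, one_mul]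

lemma c₁_commute_hGen : Commute (c₁ α₁ α₂ β₁ β₂) (hGen α₁ α₂ β₁ β₂) := by
  rw [← commutatorElement_eq_one_iff_commute, commutatorElement_def]
  exact PresentedGroup.one_of_mem (by simp [seifertRels])

lemma c₂_commute_hGen : Commute (c₂ α₁ α₂ β₁ β₂) (hGen α₁ α₂ β₁ β₂) := by
  rw [← commutatorElement_eq_one_iff_commute, commutatorElement_def]
  exact PresentedGroup.one_of_mem (by simp [seifertRels])

lemma c₁_zpow_α₁ : c₁ α₁ α₂ β₁ β₂ ^ α₁ = hGen α₁ α₂ β₁ β₂ ^ (-β₁) := by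
  rw [zpow_neg, ← mul_eq_one_iff_eq_inv]
  exact PresentedGroup.one_of_mem (by simp [seifertRels])

lemma c₂_zpow_α₂ : c₂ α₁ α₂ β₁ β₂ ^ α₂ = hGen α₁ α₂ β₁ β₂ ^ (-β₂) := by
  rw [zpow_neg, ← mul_eq_one_iff_eq_inv]
  exact PresentedGroup.one_of_mem (by simp [seifertRels])

theorem statement2 (γ₁ δ₁ γ₂ δ₂ ε k₁ k₂ : ℤ)
    (hγδ₁ : α₁ * δ₁ - β₁ * γ₁ = 1) (hγδ₂ : α₂ * δ₂ - β₂ * γ₂ = 1)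
    (hε : ε = 1 ∨ ε = -1) (hβ₁ : β₁ = -1 + k₁ * α₁) (hβ₂ : β₂ = ε + k₂ * α₂) :
    ∀ b : ℤ, w α₁ α₂ β₁ β₂ γ₁ δ₁ (-1) b 0 (-b - k₁ - k₂) =
      η₂ α₁ α₂ β₁ β₂ γ₂ δ₂ ^ ε := by
  intro b
  have hη₁ : η₁ α₁ α₂ β₁ β₂ γ₁ δ₁ = c₁ .. * hGen .. ^ k₁ :=
    (zpow_one _).symm.trans <| zpow_mul_zpow_zpow_eq_of_det_eq_one (c₁_commute_hGen ..)
      (c₁_zpow_α₁ ..) hγδ₁ hβ₁ (one_mul 1)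
  have hη₂ : η₂ α₁ α₂ β₁ β₂ γ₂ δ₂ ^ (-ε) = c₂ .. * hGen .. ^ k₂ :=
    zpow_mul_zpow_zpow_eq_of_det_eq_one (c₂_commute_hGen ..) (c₂_zpow_α₂ ..) hγδ₂
      (by rw [hβ₂, neg_neg]) (by rcases hε with rfl | rfl <;> rfl)
  rw [← inv_inv (η₂ .. ^ ε), ← zpow_neg, hη₂, ((c₂_commute_hGen ..).zpow_right k₂).mul_inv,
    w, hη₁, zpow_neg_one, zpow_zero, mul_one, mul_inv_rev]
  set c := c₁ α₁ α₂ β₁ β₂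
  set h := hGen α₁ α₂ β₁ β₂
  have hhc : Commute (h ^ b) c := ((c₁_commute_hGen ..).zpow_right b).symm
  simp only [mul_assoc]
  rw [← mul_assoc (h ^ b), hhc.eq]
  simp only [mul_assoc, inv_mul_cancel_left, ← zpow_add, ← zpow_neg]
  congr 2
  ring
end

section
/- Suppose β₁ = 1 + k₁α₁ and β₂ = −ε + k₂α₂ for some ε ∈ {1,−1} and some integers k₁, k₂. Then for every integer b, the identity w(0, b, 1, −b + k₁ + k₂) = η₂^{ε} holds in G. -/
variable (α₁ α₂ β₁ β₂ : ℤ)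

/-! If `c` commutes with `h` and `c^α h^β = 1`, then `η = c^γ h^δ` with `αδ - βγ = 1` satisfies
`η^ε = c h^k` whenever `β = -ε + kα`. With `ε = -1` this gives `η₁ = h^{-k₁} c₁⁻¹`, with `ε` itself
it gives `η₂^ε = c₂ h^{k₂}`. Since `h` is central, `w(0, b, 1, -b + k₁ + k₂)` collapses to
`h^b · h^{-k₁} c₁⁻¹ · c₁ c₂ · h^{-b + k₁ + k₂} = c₂ h^{k₂}`. -/

theorem Commute.zpow_mul_zpow_zpow_eq_mul_zpow {G : Type*} [Group G] {c h : G}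
    {α β γ δ ε k : ℤ} (hch : Commute c h) (hrel : c ^ α * h ^ β = 1)
    (hdet : α * δ - β * γ = 1) (hβ : β = -ε + k * α) :
    (c ^ γ * h ^ δ) ^ ε = c * h ^ k := by
  subst hβ
  have hcα : c ^ α = h ^ (-(-ε + k * α)) := by
    rw [zpow_neg, eq_inv_iff_mul_eq_one, hrel]
  have hεγ : ε * γ = 1 + α * (k * γ - δ) := by linear_combination hdet
  calc (c ^ γ * h ^ δ) ^ ε = c ^ (ε * γ) * h ^ (ε * δ) := by
        rw [(hch.zpow_zpow γ δ).mul_zpow, ← zpow_mul, ← zpow_mul, mul_comm γ, mul_comm δ]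
    _ = c * h ^ (-(-ε + k * α) * (k * γ - δ) + ε * δ) := by
        rw [hεγ, zpow_add, zpow_one, zpow_mul, hcα, ← zpow_mul, mul_assoc, ← zpow_add]
    _ = c * h ^ k := by
        congr 2
        linear_combination k * hdet

namespace SeifertGroup

theorem commute_c₁_hGen : Commute (c₁ α₁ α₂ β₁ β₂) (hGen α₁ α₂ β₁ β₂) := by
  have hr := PresentedGroup.one_of_mem (show FreeGroup.of 0 * FreeGroup.of 2 *
    (FreeGroup.of 0)⁻¹ * (FreeGroup.of 2)⁻¹ ∈ seifertRels α₁ α₂ β₁ β₂ by simp [seifertRels])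
  rw [← commutatorElement_eq_one_iff_commute, commutatorElement_def]
  simpa [c₁, hGen, PresentedGroup.of] using hr

theorem commute_c₂_hGen : Commute (c₂ α₁ α₂ β₁ β₂) (hGen α₁ α₂ β₁ β₂) := by
  have hr := PresentedGroup.one_of_mem (show FreeGroup.of 1 * FreeGroup.of 2 *
    (FreeGroup.of 1)⁻¹ * (FreeGroup.of 2)⁻¹ ∈ seifertRels α₁ α₂ β₁ β₂ by simp [seifertRels])
  rw [← commutatorElement_eq_one_iff_commute, commutatorElement_def]
  simpa [c₂, hGen, PresentedGroup.of] using hr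

theorem c₁_zpow_mul_hGen_zpow : c₁ α₁ α₂ β₁ β₂ ^ α₁ * hGen α₁ α₂ β₁ β₂ ^ β₁ = 1 := by
  have hr := PresentedGroup.one_of_mem (show FreeGroup.of 0 ^ α₁ * FreeGroup.of 2 ^ β₁ ∈
    seifertRels α₁ α₂ β₁ β₂ by simp [seifertRels])
  simpa [c₁, hGen, PresentedGroup.of] using hr

theorem c₂_zpow_mul_hGen_zpow : c₂ α₁ α₂ β₁ β₂ ^ α₂ * hGen α₁ α₂ β₁ β₂ ^ β₂ = 1 := by
  have hr := PresentedGroup.one_of_mem (show FreeGroup.of 1 ^ α₂ * FreeGroup.of 2 ^ β₂ ∈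
    seifertRels α₁ α₂ β₁ β₂ by simp [seifertRels])
  simpa [c₂, hGen, PresentedGroup.of] using hr

theorem η₁_eq {γ₁ δ₁ k₁ : ℤ} (hdet : α₁ * δ₁ - β₁ * γ₁ = 1) (hβ₁ : β₁ = 1 + k₁ * α₁) :
    η₁ α₁ α₂ β₁ β₂ γ₁ δ₁ = hGen α₁ α₂ β₁ β₂ ^ (-k₁) * (c₁ α₁ α₂ β₁ β₂)⁻¹ := by
  have hinv := (commute_c₁_hGen α₁ α₂ β₁ β₂).zpow_mul_zpow_zpow_eq_mul_zpow
    (c₁_zpow_mul_hGen_zpow α₁ α₂ β₁ β₂) hdet (ε := -1) (by rw [hβ₁]; ring)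
  rw [zpow_neg_one, inv_eq_iff_eq_inv] at hinv
  rw [η₁, hinv, mul_inv_rev, zpow_neg]

theorem η₂_zpow {γ₂ δ₂ ε k₂ : ℤ} (hdet : α₂ * δ₂ - β₂ * γ₂ = 1) (hβ₂ : β₂ = -ε + k₂ * α₂) :
    η₂ α₁ α₂ β₁ β₂ γ₂ δ₂ ^ ε = c₂ α₁ α₂ β₁ β₂ * hGen α₁ α₂ β₁ β₂ ^ k₂ :=
  (commute_c₂_hGen α₁ α₂ β₁ β₂).zpow_mul_zpow_zpow_eq_mul_zpow
    (c₂_zpow_mul_hGen_zpow α₁ α₂ β₁ β₂) hdet hβ₂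

end SeifertGroup

theorem statement3 (γ₁ δ₁ γ₂ δ₂ ε k₁ k₂ : ℤ)
    (hγδ₁ : α₁ * δ₁ - β₁ * γ₁ = 1) (hγδ₂ : α₂ * δ₂ - β₂ * γ₂ = 1)
    (hβ₁ : β₁ = 1 + k₁ * α₁) (hβ₂ : β₂ = -ε + k₂ * α₂) :
    ∀ b : ℤ, w α₁ α₂ β₁ β₂ γ₁ δ₁ 0 b 1 (-b + k₁ + k₂) =
      η₂ α₁ α₂ β₁ β₂ γ₂ δ₂ ^ ε := by
  intro b
  set c := c₁ α₁ α₂ β₁ β₂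
  set d := c₂ α₁ α₂ β₁ β₂
  set h := hGen α₁ α₂ β₁ β₂
  have hcentral : Commute (h ^ (b - k₁)) (d * h ^ (-b + k₁ + k₂)) :=
    ((SeifertGroup.commute_c₂_hGen α₁ α₂ β₁ β₂).zpow_right _).symm.mul_right
      (Commute.zpow_zpow_self h _ _)
  calc w α₁ α₂ β₁ β₂ γ₁ δ₁ 0 b 1 (-b + k₁ + k₂)
      = h ^ b * (h ^ (-k₁) * c⁻¹) * (c * d) * h ^ (-b + k₁ + k₂) := by
        rw [w, SeifertGroup.η₁_eq α₁ α₂ β₁ β₂ hγδ₁ hβ₁, zpow_zero, one_mul, zpow_one]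
    _ = h ^ (b - k₁) * (d * h ^ (-b + k₁ + k₂)) := by group
    _ = d * h ^ k₂ := by
        rw [hcentral.eq, mul_assoc, ← zpow_add]
        congr 2
        ring
    _ = η₂ α₁ α₂ β₁ β₂ γ₂ δ₂ ^ ε := (SeifertGroup.η₂_zpow α₁ α₂ β₁ β₂ hγδ₂ hβ₂).symm
end

section
/- The equation w(a,b,c,d) = 1 has no solutions: for all integers a, b, c, d, the element w(a,b,c,d) is a nontrivial element of G. Equivalently (since h is central in G), η₁ is not equal to (c₁c₂)^m h^n for any integers m, n; i.e., an exceptional fiber of the Seifert fibered space D(β₁/α₁, β₂/α₂) is not homotopic to a loop on its boundary. -/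
variable (α₁ α₂ β₁ β₂ : ℤ)

/-!
Killing the regular fiber `h` maps `G` onto the orbifold group `ℤ/α₁ ∗ ℤ/α₂` of the base,
sending `c₁, c₂` to the generators `u, v` of the two factors and `η₁` to `u ^ γ₁`, which is
nontrivial because `α₁ δ₁ - β₁ γ₁ = 1` forbids `α₁ ∣ γ₁`. Under this map both claims say that
`u ^ γ₁` is a power of `u v`, and the normal form theorem for free products rules that out:
`u⁻¹ u ^ γ₁ = v (u v)ⁿ` would give a nonempty reduced word with trivial product.
-/

open Monoid

namespace Monoid.CoprodI

variable {ι : Type*} {M : ι → Type*}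

theorem NeWord.prod_ne_one [∀ i, Monoid (M i)] {i j : ι} (w : NeWord M i j) : w.prod ≠ 1 := by
  classical
  intro h
  have : w.toWord = Word.empty := Word.equiv.symm.injective (h.trans Word.prod_empty.symm)
  exact w.toList_ne_nil (congrArg Word.toList this)

variable [∀ i, Group (M i)] {i j : ι}

def NeWord.alternating (hij : i ≠ j) {u : M i} {v : M j} (hu : u ≠ 1) (hv : v ≠ 1) :
    ℕ → NeWord M j j
  | 0 => .singleton v hv
  | n + 1 =>
    ((alternating hij hu hv n).append hij.symm (.singleton u hu)).append hij (.singleton v hv)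

theorem NeWord.prod_alternating (hij : i ≠ j) {u : M i} {v : M j} (hu : u ≠ 1) (hv : v ≠ 1)
    (n : ℕ) : (alternating hij hu hv n).prod = of v * (of u * of v) ^ n := by
  induction n with
  | zero => simp [alternating]
  | succ n ih =>
    rw [alternating, append_prod, append_prod, ih, prod_singleton, prod_singleton, pow_succ,
      mul_assoc, mul_assoc]

theorem of_ne_pow_of_mul_of (hij : i ≠ j) {u t : M i} {v : M j} (hu : u ≠ 1) (hv : v ≠ 1)
    (ht : t ≠ 1) (n : ℕ) : of t ≠ (of u * of v) ^ n := by
  intro h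
  cases n with
  | zero => exact ht (of_injective i (h.trans (map_one _).symm))
  | succ n =>
    have hprod : of (u⁻¹ * t) = (NeWord.alternating hij hu hv n).prod := by
      rw [NeWord.prod_alternating, map_mul, map_inv, h, pow_succ', mul_assoc, inv_mul_cancel_left]
    by_cases hut : u⁻¹ * t = 1
    · exact NeWord.prod_ne_one _ (by rw [← hprod, hut, map_one])
    · refine NeWord.prod_ne_one
        ((NeWord.alternating hij hu hv n).append hij.symm (.singleton _ (inv_ne_one.2 hut))) ?_
      rw [NeWord.append_prod, NeWord.prod_singleton, ← hprod, map_inv, mul_inv_cancel]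

theorem of_ne_zpow_of_mul_of (hij : i ≠ j) {u t : M i} {v : M j} (hu : u ≠ 1) (hv : v ≠ 1)
    (ht : t ≠ 1) (m : ℤ) : of t ≠ (of u * of v) ^ m := by
  obtain ⟨n, rfl | rfl⟩ := Int.eq_nat_or_neg m
  · exact_mod_cast of_ne_pow_of_mul_of hij hu hv ht n
  · intro h
    refine of_ne_pow_of_mul_of hij hu hv (inv_ne_one.2 ht) n ?_
    rw [map_inv, h, zpow_neg, zpow_natCast, inv_inv]

end Monoid.CoprodI

theorem Multiplicative.ofAdd_one_zpow_eq_one_iff {α k : ℤ} :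
    ofAdd (1 : ZMod α.natAbs) ^ k = 1 ↔ α ∣ k := by
  rw [← ofAdd_zsmul, zsmul_one, ofAdd_eq_one, ZMod.intCast_zmod_eq_zero_iff_dvd, Int.natAbs_dvd]

namespace SeifertGroup

section Lift

variable {H : Type*} [Group H] (x y z : H) (hxz : Commute x z) (hyz : Commute y z)
  (hx : x ^ α₁ * z ^ β₁ = 1) (hy : y ^ α₂ * z ^ β₂ = 1)

def lift : SeifertGroup α₁ α₂ β₁ β₂ →* H :=
  PresentedGroup.toGroup (f := ![x, y, z]) <| by
    rintro r (rfl | rfl | rfl | rfl) <;> simp [hxz.eq, hyz.eq, hx, hy]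

theorem lift_c₁ : lift α₁ α₂ β₁ β₂ x y z hxz hyz hx hy (c₁ α₁ α₂ β₁ β₂) = x :=
  PresentedGroup.toGroup.of _

theorem lift_c₂ : lift α₁ α₂ β₁ β₂ x y z hxz hyz hx hy (c₂ α₁ α₂ β₁ β₂) = y :=
  PresentedGroup.toGroup.of _

theorem lift_hGen : lift α₁ α₂ β₁ β₂ x y z hxz hyz hx hy (hGen α₁ α₂ β₁ β₂) = z :=
  PresentedGroup.toGroup.of _

end Lift

abbrev OrbifoldGroup : Type :=
  CoprodI fun i : Fin 2 => Multiplicative (ZMod (![α₁, α₂] i).natAbs)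

def toOrbifoldGroup : SeifertGroup α₁ α₂ β₁ β₂ →* OrbifoldGroup α₁ α₂ :=
  lift α₁ α₂ β₁ β₂ (CoprodI.of (i := 0) (Multiplicative.ofAdd 1))
    (CoprodI.of (i := 1) (Multiplicative.ofAdd 1)) 1 (.one_right _) (.one_right _)
    (by rw [one_zpow, mul_one, ← map_zpow, map_eq_one_iff _ (CoprodI.of_injective _)]
        exact Multiplicative.ofAdd_one_zpow_eq_one_iff.2 dvd_rfl)
    (by rw [one_zpow, mul_one, ← map_zpow, map_eq_one_iff _ (CoprodI.of_injective _)]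
        exact Multiplicative.ofAdd_one_zpow_eq_one_iff.2 dvd_rfl)

theorem toOrbifoldGroup_η₁_ne_zpow {γ₁ δ₁ : ℤ} (hα₁ : ¬α₁ ∣ 1) (hα₂ : ¬α₂ ∣ 1) (hγ₁ : ¬α₁ ∣ γ₁)
    (m : ℤ) :
    toOrbifoldGroup α₁ α₂ β₁ β₂ (η₁ α₁ α₂ β₁ β₂ γ₁ δ₁) ≠
      toOrbifoldGroup α₁ α₂ β₁ β₂ (c₁ α₁ α₂ β₁ β₂ * c₂ α₁ α₂ β₁ β₂) ^ m := by
  rw [η₁, map_mul, map_mul, map_zpow, map_zpow, toOrbifoldGroup, lift_c₁, lift_c₂, lift_hGen,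
    one_zpow, mul_one, ← map_zpow]
  exact CoprodI.of_ne_zpow_of_mul_of (by decide)
    (fun h => hα₁ (Multiplicative.ofAdd_one_zpow_eq_one_iff.1 ((zpow_one _).trans h)))
    (fun h => hα₂ (Multiplicative.ofAdd_one_zpow_eq_one_iff.1 ((zpow_one _).trans h)))
    (mt Multiplicative.ofAdd_one_zpow_eq_one_iff.1 hγ₁) m

end SeifertGroup

theorem statement4 (γ₁ δ₁ : ℤ)
    (hα₁ : 1 < α₁) (hα₂ : 1 < α₂)
    (hγδ₁ : α₁ * δ₁ - β₁ * γ₁ = 1) :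
    (∀ a b c d : ℤ, w α₁ α₂ β₁ β₂ γ₁ δ₁ a b c d ≠ 1) ∧
    (∀ m n : ℤ, η₁ α₁ α₂ β₁ β₂ γ₁ δ₁ ≠
      (c₁ α₁ α₂ β₁ β₂ * c₂ α₁ α₂ β₁ β₂) ^ m * hGen α₁ α₂ β₁ β₂ ^ n) := by
  have not_dvd_one {α : ℤ} (hα : 1 < α) : ¬α ∣ 1 := fun h =>
    hα.ne' (Int.eq_one_of_dvd_one (by omega) h)
  have hγ₁ : ¬α₁ ∣ γ₁ := fun h => not_dvd_one hα₁ <| hγδ₁ ▸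
    (dvd_mul_right α₁ δ₁).sub (dvd_mul_of_dvd_right h β₁)
  have key := SeifertGroup.toOrbifoldGroup_η₁_ne_zpow α₁ α₂ β₁ β₂
    (not_dvd_one hα₁) (not_dvd_one hα₂) hγ₁ (δ₁ := δ₁)
  set φ := SeifertGroup.toOrbifoldGroup α₁ α₂ β₁ β₂
  set C := c₁ α₁ α₂ β₁ β₂ * c₂ α₁ α₂ β₁ β₂
  have hφh : φ (hGen α₁ α₂ β₁ β₂) = 1 := SeifertGroup.lift_hGen ..
  refine ⟨fun a b c d hw => key (-a - c) ?_, fun m n h => key m ?_⟩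
  · set X := φ C
    have hφw : X ^ a * φ (η₁ α₁ α₂ β₁ β₂ γ₁ δ₁) * X ^ c = 1 := by
      have := congrArg φ hw
      rw [w, map_mul, map_mul, map_mul, map_mul, map_zpow, map_zpow, map_zpow, map_zpow, hφh,
        one_zpow, one_zpow, mul_one, mul_one, map_one] at this
      exact this
    calc φ (η₁ α₁ α₂ β₁ β₂ γ₁ δ₁)
        = X ^ (-a) * (X ^ a * φ (η₁ α₁ α₂ β₁ β₂ γ₁ δ₁) * X ^ c) * X ^ (-c) := by group
      _ = X ^ (-a - c) := by rw [hφw]; group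
  · simpa only [map_mul, map_zpow, hφh, one_zpow, mul_one] using congrArg φ h
end

section
/- Let a ≤ −1 and c ≥ 1 be integers, and let γ be an integer with γ ≢ 0 (mod α₁). Then the element (xy)^a x^γ (xy)^c of Γ is neither a power of x nor a power of y. -/
/-- The free product `Γ = C_{α₁} ∗ C_{α₂}` of cyclic groups of orders `α₁` and `α₂`. -/
abbrev FPCyclic (α₁ α₂ : ℕ) :=
  Monoid.Coprod (Multiplicative (ZMod α₁)) (Multiplicative (ZMod α₂))

variable (α₁ α₂ : ℕ)

/-- The fixed generator `x` of the first factor `C_{α₁}`. -/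
def xGen : FPCyclic α₁ α₂ := Monoid.Coprod.inl (Multiplicative.ofAdd (1 : ZMod α₁))

/-- The fixed generator `y` of the second factor `C_{α₂}`. -/
def yGen : FPCyclic α₁ α₂ := Monoid.Coprod.inr (Multiplicative.ofAdd (1 : ZMod α₂))

/-!
Writing `a = -(n + 1)` and `c = k + 1`, the element equals `(y⁻¹x⁻¹)ⁿ · y⁻¹ x^γ y · (xy)ᵏ`.
Since `x^γ ≠ 1` and `y ≠ 1`, this is a reduced word of length at least three in the free
product, while an element of a single factor is a reduced word of length at most one; reduced
words are unique.
-/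

namespace Monoid.CoprodI

variable {ι : Type*} {M : ι → Type*} [∀ i, Monoid (M i)]

theorem Word.prod_injective [DecidableEq ι] [∀ i, DecidableEq (M i)] :
    Function.Injective (Word.prod : Word M → CoprodI M) :=
  Word.equiv.symm.injective

theorem exists_word_prod_eq_of {k : ι} (m : M k) :
    ∃ v : Word M, v.prod = of m ∧ v.toList.length ≤ 1 := by
  by_cases hm : m = 1
  · exact ⟨.empty, by simp [hm], by simp⟩
  · exact ⟨(NeWord.singleton m hm).toWord, NeWord.prod_singleton m hm, by simp [NeWord.toWord]⟩

namespace NeWord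

theorem prod_ne_of_of_two_le_length [DecidableEq ι] [∀ i, DecidableEq (M i)] {i j k : ι}
    (w : NeWord M i j) (hw : 2 ≤ w.toList.length) (m : M k) : w.prod ≠ of m := by
  intro h
  obtain ⟨v, hv, hlen⟩ := exists_word_prod_eq_of m
  have hwv : w.toWord = v := Word.prod_injective (h.trans hv.symm)
  have : w.toList.length = v.toList.length := congrArg (·.toList.length) hwv
  omega

theorem exists_prod_mul_pow {i j k : ι} (hij : i ≠ j) {x : M i} {y : M j} (hx : x ≠ 1)
    (hy : y ≠ 1) (w : NeWord M k j) (n : ℕ) :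
    ∃ w' : NeWord M k j, w'.prod = w.prod * (of x * of y) ^ n ∧
      w.toList.length ≤ w'.toList.length := by
  induction n with
  | zero => exact ⟨w, by simp, le_rfl⟩
  | succ n ih =>
    obtain ⟨w', hprod, hlen⟩ := ih
    refine ⟨append w' hij.symm (append (singleton x hx) hij (singleton y hy)), ?_, ?_⟩
    · simp [hprod, pow_succ, mul_assoc]
    · simp only [toList, List.length_append]
      omega

theorem exists_pow_mul_prod {i j k : ι} (hij : i ≠ j) {x : M i} {y : M j} (hx : x ≠ 1)
    (hy : y ≠ 1) (w : NeWord M i k) (n : ℕ) :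
    ∃ w' : NeWord M i k, w'.prod = (of x * of y) ^ n * w.prod ∧
      w.toList.length ≤ w'.toList.length := by
  induction n with
  | zero => exact ⟨w, by simp, le_rfl⟩
  | succ n ih =>
    obtain ⟨w', hprod, hlen⟩ := ih
    refine ⟨append (append (singleton x hx) hij (singleton y hy)) hij.symm w', ?_, ?_⟩
    · simp [hprod, pow_succ', mul_assoc]
    · simp only [toList, List.length_append]
      omega

end NeWord

end Monoid.CoprodI

theorem zpow_neg_succ_mul_zpow_mul_zpow_succ {G : Type*} [Group G] (g h : G) (γ : ℤ)
    (n k : ℕ) :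
    (g * h) ^ (-((n : ℤ) + 1)) * g ^ γ * (g * h) ^ ((k : ℤ) + 1) =
      (h⁻¹ * g⁻¹) ^ n * (h⁻¹ * g ^ γ * h * (g * h) ^ k) := by
  rw [← mul_inv_rev, inv_pow, ← zpow_natCast, ← zpow_neg, neg_add, zpow_add, add_comm (k : ℤ),
    zpow_one_add, zpow_neg_one, zpow_natCast, mul_inv_rev]
  generalize (g * h) ^ (-(n : ℤ)) = P
  generalize (g * h) ^ k = Q
  group

namespace Monoid.Coprod

universe u

variable {M N : Type u} [Group M] [Group N]

variable (M N) in
abbrev Factor (b : Bool) : Type u := cond b M N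

instance (b : Bool) : Group (Factor M N b) := by
  cases b
  · exact ‹Group N›
  · exact ‹Group M›

-- Reduced words are only developed for `Monoid.CoprodI`, hence this comparison map.
def toCoprodI : M ∗ N →* CoprodI (Factor M N) :=
  lift (CoprodI.of (M := Factor M N) (i := true) : Factor M N true →* _)
    (CoprodI.of (M := Factor M N) (i := false) : Factor M N false →* _)

@[simp]
theorem toCoprodI_inl (m : M) :
    toCoprodI (inl m : M ∗ N) = CoprodI.of (M := Factor M N) (i := true) m :=
  lift_apply_inl _ _ _

@[simp]
theorem toCoprodI_inr (n : N) :
    toCoprodI (inr n : M ∗ N) = CoprodI.of (M := Factor M N) (i := false) n :=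
  lift_apply_inr _ _ _

theorem toCoprodI_zpow_mul_inl_mul_zpow_ne_of {x : M} {y : N} {γ a c : ℤ} (hy : y ≠ 1)
    (hγ : x ^ γ ≠ 1) (ha : a ≤ -1) (hc : 1 ≤ c) {b : Bool} (m : Factor M N b) :
    toCoprodI ((inl x * inr y) ^ a * inl (x ^ γ) * (inl x * inr y) ^ c) ≠ CoprodI.of m := by
  classical
  obtain ⟨n, rfl⟩ : ∃ n : ℕ, a = -((n : ℤ) + 1) := ⟨(-a - 1).toNat, by omega⟩
  obtain ⟨k, rfl⟩ : ∃ k : ℕ, c = (k : ℤ) + 1 := ⟨(c - 1).toNat, by omega⟩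
  have hx : x ≠ 1 := by rintro rfl; exact hγ (one_zpow γ)
  let core : CoprodI.NeWord (Factor M N) false false :=
    .append (.append (.singleton (i := false) y⁻¹ (inv_ne_one.2 hy)) Bool.false_ne_true
      (.singleton (i := true) (x ^ γ) hγ)) Bool.false_ne_true.symm (.singleton (i := false) y hy)
  obtain ⟨w, hw, hlen⟩ := core.exists_prod_mul_pow Bool.false_ne_true.symm hx hy k
  obtain ⟨w', hw', hlen'⟩ := w.exists_pow_mul_prod Bool.false_ne_true (inv_ne_one.2 hy)
    (inv_ne_one.2 hx) n
  have hg : toCoprodI ((inl x * inr y) ^ (-((n : ℤ) + 1)) * inl (x ^ γ) *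
      (inl x * inr y) ^ ((k : ℤ) + 1)) = w'.prod := by
    simp only [hw', hw, core, map_mul, map_zpow, map_pow, toCoprodI_inl, toCoprodI_inr,
      CoprodI.NeWord.append_prod, CoprodI.NeWord.prod_singleton, map_inv,
      zpow_neg_succ_mul_zpow_mul_zpow_succ]
  rw [hg]
  have hcore : core.toList.length = 3 := rfl
  exact w'.prod_ne_of_of_two_le_length (by omega) m

theorem zpow_mul_inl_mul_zpow_ne_inl {x : M} {y : N} {γ a c : ℤ} (hy : y ≠ 1)
    (hγ : x ^ γ ≠ 1) (ha : a ≤ -1) (hc : 1 ≤ c) (m : M) :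
    (inl x * inr y) ^ a * inl (x ^ γ) * (inl x * inr y) ^ c ≠ inl m := fun h =>
  toCoprodI_zpow_mul_inl_mul_zpow_ne_of hy hγ ha hc (b := true) m (by rw [h, toCoprodI_inl])

theorem zpow_mul_inl_mul_zpow_ne_inr {x : M} {y : N} {γ a c : ℤ} (hy : y ≠ 1)
    (hγ : x ^ γ ≠ 1) (ha : a ≤ -1) (hc : 1 ≤ c) (n : N) :
    (inl x * inr y) ^ a * inl (x ^ γ) * (inl x * inr y) ^ c ≠ inr n := fun h =>
  toCoprodI_zpow_mul_inl_mul_zpow_ne_of hy hγ ha hc (b := false) n (by rw [h, toCoprodI_inr])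

end Monoid.Coprod

theorem statement6 (hα₂ : 2 ≤ α₂) (a c γ : ℤ)
    (ha : a ≤ -1) (hc : 1 ≤ c) (hγ : ¬ ((α₁ : ℤ) ∣ γ)) :
    ¬ ∃ m : ℤ,
      (xGen α₁ α₂ * yGen α₁ α₂) ^ a * xGen α₁ α₂ ^ γ * (xGen α₁ α₂ * yGen α₁ α₂) ^ c =
          xGen α₁ α₂ ^ m ∨
      (xGen α₁ α₂ * yGen α₁ α₂) ^ a * xGen α₁ α₂ ^ γ * (xGen α₁ α₂ * yGen α₁ α₂) ^ c =
          yGen α₁ α₂ ^ m := by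
  have hy : Multiplicative.ofAdd (1 : ZMod α₂) ≠ 1 := by
    have : Nontrivial (ZMod α₂) := ZMod.nontrivial_iff.2 (by omega)
    exact ofAdd_eq_one.not.2 one_ne_zero
  have hx : Multiplicative.ofAdd (1 : ZMod α₁) ^ γ ≠ 1 := by
    rw [← ofAdd_zsmul, zsmul_one, Ne, ofAdd_eq_one, ZMod.intCast_zmod_eq_zero_iff_dvd]
    exact hγ
  rintro ⟨m, h | h⟩
  · exact Monoid.Coprod.zpow_mul_inl_mul_zpow_ne_inl hy hx ha hc _
      (by simpa only [xGen, yGen, ← map_zpow] using h)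
  · exact Monoid.Coprod.zpow_mul_inl_mul_zpow_ne_inr hy hx ha hc _
      (by simpa only [xGen, yGen, ← map_zpow] using h)
end

section
/- Let u ∈ A with u ∉ C and v ∈ B with v ∉ C. Then the commutator [u,v] = u v u⁻¹ v⁻¹ is a nontrivial element of G, and moreover [u,v] is not conjugate in G to any element of A nor to any element of B (so every word conjugate to [u,v]^{±1} has length at least 4 in the amalgamated free product normal form). -/
open Monoid
open scoped commutatorElement

/-!
Let `z = [u, v]`. Acting on normal forms, `z` prepends four letters to any normal word whose first
letter does not lie in `B`, and the result starts with a letter of `A`; hence the normal form of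
`z ^ n` has length `4 n`. On the other hand left multiplication by a fixed element changes the
length of a normal form by a bounded amount, and the normal form of a power of an element of a
factor has length at most one, so the normal forms of the powers of a conjugate `c⁻¹ a c` of a
factor element have bounded length. Hence `z` is conjugate to no element of `A` or `B`, and in
particular `z ≠ 1`.
-/

namespace Monoid.PushoutI.NormalWord

variable {ι : Type*} {H : Type*} [Group H] {G : ι → Type*} [∀ i, Group (G i)]
  {φ : ∀ i, H →* G i} {d : Transversal φ}

theorem length_toList_cons {i : ι} (g : G i) (w : NormalWord d) (hmw : w.fstIdx ≠ some i)
    (hgr : g ∉ (φ i).range) : (cons g w hmw hgr).toList.length = w.toList.length + 1 := by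
  simp [cons]

theorem fstIdx_cons {i : ι} (g : G i) (w : NormalWord d) (hmw : w.fstIdx ≠ some i)
    (hgr : g ∉ (φ i).range) : (cons g w hmw hgr).fstIdx = some i := by
  simp [cons, CoprodI.Word.fstIdx]

variable [DecidableEq ι] [∀ i, DecidableEq (G i)]

theorem toList_base_smul (h : H) (w : NormalWord d) : (base φ h • w).toList = w.toList :=
  rfl

theorem length_toList_of_smul {i : ι} {c : G i} (hc : c ∉ (φ i).range) {w : NormalWord d}
    (hw : w.fstIdx ≠ some i) : (of (φ := φ) i c • w).toList.length = w.toList.length + 1 := by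
  rw [← cons_eq_smul c w hw hc, length_toList_cons]

theorem fstIdx_of_smul {i : ι} {c : G i} (hc : c ∉ (φ i).range) {w : NormalWord d}
    (hw : w.fstIdx ≠ some i) : (of (φ := φ) i c • w).fstIdx = some i := by
  rw [← cons_eq_smul c w hw hc, fstIdx_cons]

theorem length_toList_of_smul_le_of_fstIdx_ne {i : ι} (c : G i) {w : NormalWord d}
    (hw : w.fstIdx ≠ some i) :
    (of (φ := φ) i c • w).toList.length ≤ w.toList.length + 1 := by
  by_cases hc : c ∈ (φ i).range
  · obtain ⟨h, rfl⟩ := hc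
    rw [of_apply_eq_base, toList_base_smul]
    omega
  · rw [length_toList_of_smul hc hw]

theorem length_toList_of_smul_le (i : ι) (c : G i) (w : NormalWord d) :
    (of (φ := φ) i c • w).toList.length ≤ w.toList.length + 1 := by
  induction w using consRecOn generalizing c with
  | empty => exact length_toList_of_smul_le_of_fstIdx_ne c (by simp [CoprodI.Word.fstIdx])
  | cons j g w hmw _ hgr _ _ =>
    by_cases hij : i = j
    · subst hij
      rw [cons_eq_smul, ← mul_smul, ← map_mul, ← cons_eq_smul g w hmw hgr, length_toList_cons]
      exact (length_toList_of_smul_le_of_fstIdx_ne _ hmw).trans (Nat.le_succ _)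
    · refine length_toList_of_smul_le_of_fstIdx_ne c ?_
      rw [fstIdx_cons]
      exact (Option.some_injective _).ne (Ne.symm hij)
  | base h w _ ih =>
    rw [toList_base_smul, ← mul_smul, ← of_apply_eq_base φ i, ← map_mul]
    exact ih _

theorem exists_length_toList_smul_le (g : PushoutI φ) :
    ∃ K : ℕ, ∀ w : NormalWord d, (g • w).toList.length ≤ w.toList.length + K := by
  induction g using PushoutI.induction_on with
  | of i c => exact ⟨1, length_toList_of_smul_le i c⟩
  | base h => exact ⟨0, fun w => (congrArg List.length (toList_base_smul h w)).le⟩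
  | mul x y ihx ihy =>
    obtain ⟨Kx, hx⟩ := ihx
    obtain ⟨Ky, hy⟩ := ihy
    refine ⟨Ky + Kx, fun w => ?_⟩
    rw [mul_smul]
    have := hy w
    have := hx (y • w)
    omega

theorem not_isConj_of_of_forall_le_length_toList_pow_smul {g : PushoutI φ}
    (hg : ∀ n : ℕ, n ≤ (g ^ n • (empty : NormalWord d)).toList.length) (i : ι) (a : G i) :
    ¬ IsConj g (of i a) := by
  intro hconj
  obtain ⟨c, hc⟩ := isConj_iff.mp hconj
  obtain ⟨K, hK⟩ := exists_length_toList_smul_le (d := d) c⁻¹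
  obtain ⟨L, hL⟩ := exists_length_toList_smul_le (d := d) c
  set n := K + L + 2
  have hpow : g ^ n = c⁻¹ * of (φ := φ) i (a ^ n) * c := by
    rw [map_pow, ← hc, conj_pow]
    group
  have hlen := hg n
  rw [hpow, mul_smul, mul_smul] at hlen
  have := hK (of (φ := φ) i (a ^ n) • c • empty)
  have := length_toList_of_smul_le i (a ^ n) (c • (empty : NormalWord d))
  have := hL empty
  have : (empty : NormalWord d).toList.length = 0 := rfl
  omega

variable {i j : ι} {u : G i} {v : G j}

theorem length_toList_commutator_smul (hij : i ≠ j) (hu : u ∉ (φ i).range)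
    (hv : v ∉ (φ j).range) {w : NormalWord d} (hw : w.fstIdx ≠ some j) :
    (⁅of (φ := φ) i u, of (φ := φ) j v⁆ • w).toList.length = w.toList.length + 4 ∧
      (⁅of (φ := φ) i u, of (φ := φ) j v⁆ • w).fstIdx = some i := by
  have hu' : u⁻¹ ∉ (φ i).range := fun h => hu ((φ i).range.inv_mem_iff.mp h)
  have hv' : v⁻¹ ∉ (φ j).range := fun h => hv ((φ j).range.inv_mem_iff.mp h)
  have hji : some i ≠ some j := by simpa using hij
  rw [commutatorElement_def, ← map_inv, ← map_inv, mul_smul, mul_smul, mul_smul]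
  have h₁ := fstIdx_of_smul hv' hw
  have h₂ := fstIdx_of_smul hu' (h₁ ▸ hji.symm)
  have h₃ := fstIdx_of_smul hv (h₂ ▸ hji)
  refine ⟨?_, fstIdx_of_smul hu (h₃ ▸ hji.symm)⟩
  rw [length_toList_of_smul hu (h₃ ▸ hji.symm), length_toList_of_smul hv (h₂ ▸ hji),
    length_toList_of_smul hu' (h₁ ▸ hji.symm), length_toList_of_smul hv' hw]

theorem length_toList_commutator_pow_smul_empty (hij : i ≠ j) (hu : u ∉ (φ i).range)
    (hv : v ∉ (φ j).range) (n : ℕ) :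
    (⁅of (φ := φ) i u, of (φ := φ) j v⁆ ^ n • (empty : NormalWord d)).toList.length = 4 * n ∧
      (⁅of (φ := φ) i u, of (φ := φ) j v⁆ ^ n • (empty : NormalWord d)).fstIdx ≠ some j := by
  induction n with
  | zero => simp [CoprodI.Word.fstIdx]
  | succ n ih =>
    rw [pow_succ', mul_smul]
    obtain ⟨hlen, hfst⟩ := length_toList_commutator_smul hij hu hv ih.2
    refine ⟨by omega, ?_⟩
    simpa [hfst] using hij

end Monoid.PushoutI.NormalWord

open Monoid.PushoutI.NormalWord in
/-- In an amalgamated free product `G = A ∗_C B` (with `C` embedded in `A = G 0` and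
`B = G 1` by injective homomorphisms), if `u ∈ A ∖ C` and `v ∈ B ∖ C`, then the
commutator `[u,v] = u v u⁻¹ v⁻¹` is nontrivial in `G`, and it is not conjugate in `G`
to any element of `A` nor to any element of `B`. -/
theorem statement10 {C : Type*} [Group C] {G : Fin 2 → Type*} [∀ i, Group (G i)]
    (φ : ∀ i, C →* G i) (hφ : ∀ i, Function.Injective (φ i))
    (u : G 0) (hu : u ∉ (φ 0).range) (v : G 1) (hv : v ∉ (φ 1).range) :
    ⁅PushoutI.of (φ := φ) 0 u, PushoutI.of (φ := φ) 1 v⁆ ≠ 1 ∧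
    (∀ a : G 0, ¬ IsConj ⁅PushoutI.of (φ := φ) 0 u, PushoutI.of (φ := φ) 1 v⁆
        (PushoutI.of (φ := φ) 0 a)) ∧
    (∀ b : G 1, ¬ IsConj ⁅PushoutI.of (φ := φ) 0 u, PushoutI.of (φ := φ) 1 v⁆
        (PushoutI.of (φ := φ) 1 b)) := by
  classical
  obtain ⟨d⟩ := transversal_nonempty φ hφ
  have hnotConj : ∀ (i : Fin 2) (a : G i),
      ¬ IsConj ⁅PushoutI.of (φ := φ) 0 u, PushoutI.of (φ := φ) 1 v⁆ (PushoutI.of i a) :=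
    not_isConj_of_of_forall_le_length_toList_pow_smul (d := d) fun n => by
      rw [(length_toList_commutator_pow_smul_empty zero_ne_one hu hv n).1]
      omega
  refine ⟨fun h => hnotConj 0 1 ?_, hnotConj 0, hnotConj 1⟩
  rw [h, map_one]
end

section
/- Let u, v, x ∈ A with u, v, x ∉ C and let s, t ∈ B with s, t ∉ C. Then the element [u, t v t⁻¹] = u (t v t⁻¹) u⁻¹ (t v t⁻¹)⁻¹ of G (a cyclically reduced word of length 8) is not conjugate in G to [s, x] = s x s⁻¹ x⁻¹ nor to [s, x]⁻¹ (cyclically reduced words of length 4). -/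
/-!
Elements of `A ∗_C B` are represented by reduced words, alternating letters of `A ∖ C` and
`B ∖ C`, and by the normal form theorem the length of such a word depends only on the element.
A reduced word `y` whose first and last letters lie in different factors has no shorter
conjugate: when conjugating by a reduced word `g₁ ⋯ gₘ`, the innermost letter `gₘ` either does
not interact with `y`, or merges with an end letter of `y` into a letter outside `C` (in both
cases `g y g⁻¹` is already reduced), or is absorbed into `C` together with that end letter, and
then `gₘ y gₘ⁻¹` is a word of the same kind and length and we induct on `m`. Now `[u, t v t⁻¹]`
is such a word of length 8, whereas `[s, x]` and its inverse are reduced words of length 4.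
-/

open Monoid
open scoped commutatorElement

theorem Subgroup.IsComplement.eq_one_of_mem_of_mem {G : Type*} [Group G] {S T : Set G}
    (hST : Subgroup.IsComplement S T) (hS : 1 ∈ S) (hT : 1 ∈ T) {g : G} (hgS : g ∈ S)
    (hgT : g ∈ T) : g = 1 :=
  congrArg Subtype.val <| (hST.equiv_snd_eq_self_of_mem_of_one_mem hS hgT).symm.trans
    (hST.equiv_snd_eq_one_of_mem_of_one_mem hT hgS)

namespace AmalgamatedProduct

open PushoutI

variable {ι : Type*} {G : ι → Type*} [∀ i, Group (G i)] {H : Type*} [Group H]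
  (φ : ∀ i, H →* G i)

def prod (l : List (Σ i, G i)) : PushoutI φ :=
  (l.map fun a => of a.1 a.2).prod

def invRev (l : List (Σ i, G i)) : List (Σ i, G i) :=
  (l.map fun a => ⟨a.1, a.2⁻¹⟩).reverse

def conjBy (h : H) (l : List (Σ i, G i)) : List (Σ i, G i) :=
  l.map fun a => ⟨a.1, MulAut.conj (φ a.1 h) a.2⟩

structure IsReduced (l : List (Σ i, G i)) : Prop where
  chain_ne : l.IsChain fun a b => a.1 ≠ b.1
  not_mem_range : ∀ a ∈ l, a.2 ∉ (φ a.1).range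

/-- Words of length one are excluded: a letter of `G i ∖ range (φ i)` may well be conjugate
in `G i` into `range (φ i)`. -/
structure IsCyclicallyReduced (l : List (Σ i, G i)) : Prop extends IsReduced φ l where
  ne_nil : l ≠ []
  head_ne_getLast : ∀ a ∈ l.head?, ∀ b ∈ l.getLast?, a.1 ≠ b.1

variable {φ}

@[simp] theorem prod_nil : prod φ ([] : List (Σ i, G i)) = 1 := rfl

@[simp] theorem prod_cons (a : Σ i, G i) (l : List (Σ i, G i)) :
    prod φ (a :: l) = of a.1 a.2 * prod φ l := by
  simp [prod]

@[simp] theorem prod_append (l₁ l₂ : List (Σ i, G i)) :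
    prod φ (l₁ ++ l₂) = prod φ l₁ * prod φ l₂ := by
  simp [prod]

@[simp] theorem prod_invRev (l : List (Σ i, G i)) : prod φ (invRev l) = (prod φ l)⁻¹ := by
  induction l with
  | nil => rfl
  | cons a l ih => simp_all [invRev]

theorem prod_conjBy (h : H) (l : List (Σ i, G i)) :
    prod φ (conjBy φ h l) = base φ h * prod φ l * (base φ h)⁻¹ := by
  induction l with
  | nil => simp [conjBy]
  | cons a l ih =>
    simp only [conjBy, List.map_cons, prod_cons, MulAut.conj_apply, map_mul, map_inv,
      of_apply_eq_base] at ih ⊢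
    rw [ih]
    group

@[simp] theorem length_invRev (l : List (Σ i, G i)) : (invRev l).length = l.length := by
  simp [invRev]

@[simp] theorem head?_invRev (l : List (Σ i, G i)) :
    (invRev l).head? = l.getLast?.map fun a => ⟨a.1, a.2⁻¹⟩ := by
  simp [invRev, List.head?_reverse, List.getLast?_map]

@[simp] theorem length_conjBy (h : H) (l : List (Σ i, G i)) :
    (conjBy φ h l).length = l.length := by
  simp [conjBy]

theorem isReduced_append {l₁ l₂ : List (Σ i, G i)} :
    IsReduced φ (l₁ ++ l₂) ↔ IsReduced φ l₁ ∧ IsReduced φ l₂ ∧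
      ∀ a ∈ l₁.getLast?, ∀ b ∈ l₂.head?, a.1 ≠ b.1 := by
  constructor
  · rintro ⟨hc, hr⟩
    rw [List.isChain_append] at hc
    exact ⟨⟨hc.1, fun a ha => hr a (by simp [ha])⟩, ⟨hc.2.1, fun a ha => hr a (by simp [ha])⟩,
      hc.2.2⟩
  · rintro ⟨⟨hc₁, hr₁⟩, ⟨hc₂, hr₂⟩, hb⟩
    refine ⟨List.isChain_append.2 ⟨hc₁, hc₂, hb⟩, fun a ha => ?_⟩
    rcases List.mem_append.1 ha with ha | ha
    exacts [hr₁ a ha, hr₂ a ha]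

theorem isReduced_singleton {a : Σ i, G i} : IsReduced φ [a] ↔ a.2 ∉ (φ a.1).range :=
  ⟨fun h => h.not_mem_range a (List.mem_singleton_self a),
    fun h => ⟨List.isChain_singleton a, fun _ hb => List.eq_of_mem_singleton hb ▸ h⟩⟩

theorem isReduced_cons {a : Σ i, G i} {l : List (Σ i, G i)} :
    IsReduced φ (a :: l) ↔
      a.2 ∉ (φ a.1).range ∧ IsReduced φ l ∧ ∀ b ∈ l.head?, a.1 ≠ b.1 := by
  rw [← List.singleton_append, isReduced_append, isReduced_singleton]
  simp

theorem IsReduced.invRev {l : List (Σ i, G i)} (hl : IsReduced φ l) :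
    IsReduced φ (invRev l) := by
  refine ⟨?_, ?_⟩
  · rw [AmalgamatedProduct.invRev, List.isChain_reverse, List.isChain_map]
    exact hl.chain_ne.imp fun _ _ h => Ne.symm h
  · simp only [AmalgamatedProduct.invRev, List.mem_reverse, List.mem_map]
    rintro _ ⟨a, ha, rfl⟩ hmem
    exact hl.not_mem_range a ha (by simpa using inv_mem hmem)

theorem IsCyclicallyReduced.invRev {l : List (Σ i, G i)} (hl : IsCyclicallyReduced φ l) :
    IsCyclicallyReduced φ (invRev l) where
  toIsReduced := hl.toIsReduced.invRev
  ne_nil := by simpa [AmalgamatedProduct.invRev] using hl.ne_nil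
  head_ne_getLast a ha b hb := by
    simp only [AmalgamatedProduct.invRev, List.head?_reverse, List.getLast?_reverse,
      List.getLast?_map, List.head?_map, Option.mem_def, Option.map_eq_some_iff] at ha hb
    obtain ⟨a, ha, rfl⟩ := ha
    obtain ⟨b, hb, rfl⟩ := hb
    exact (hl.head_ne_getLast b hb a ha).symm

theorem IsReduced.conjBy {l : List (Σ i, G i)} (hl : IsReduced φ l) (h : H) :
    IsReduced φ (conjBy φ h l) := by
  refine ⟨?_, ?_⟩
  · rw [AmalgamatedProduct.conjBy, List.isChain_map]
    exact hl.chain_ne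
  · simp only [AmalgamatedProduct.conjBy, List.mem_map]
    rintro _ ⟨a, ha, rfl⟩ hmem
    refine hl.not_mem_range a ha ?_
    have hc : φ a.1 h ∈ (φ a.1).range := ⟨h, rfl⟩
    simpa [mul_mem_cancel_left hc, mul_mem_cancel_right (inv_mem hc)] using hmem

variable (φ) in
def IsReduced.toWord {l : List (Σ i, G i)} (hl : IsReduced φ l) : CoprodI.Word G where
  toList := l
  ne_one a ha h1 := hl.not_mem_range a ha (h1 ▸ one_mem _)
  chain_ne := hl.chain_ne

theorem IsReduced.ofCoprodI_toWord_prod {l : List (Σ i, G i)} (hl : IsReduced φ l) :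
    ofCoprodI (hl.toWord φ).prod = prod φ l := by
  simp [CoprodI.Word.prod, IsReduced.toWord, prod, ← List.prod_hom, Function.comp_def]

theorem IsReduced.length_eq_of_prod_eq (hφ : ∀ i, Function.Injective (φ i))
    {l₁ l₂ : List (Σ i, G i)} (h₁ : IsReduced φ l₁) (h₂ : IsReduced φ l₂)
    (h : prod φ l₁ = prod φ l₂) : l₁.length = l₂.length := by
  obtain ⟨d⟩ := NormalWord.transversal_nonempty φ hφ
  obtain ⟨w₁, hw₁, hfst₁⟩ :=
    Reduced.exists_normalWord_prod_eq d (w := h₁.toWord φ) h₁.not_mem_range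
  obtain ⟨w₂, hw₂, hfst₂⟩ :=
    Reduced.exists_normalWord_prod_eq d (w := h₂.toWord φ) h₂.not_mem_range
  have hw : w₁ = w₂ := NormalWord.prod_injective <| by
    rw [hw₁, hw₂, h₁.ofCoprodI_toWord_prod, h₂.ofCoprodI_toWord_prod, h]
  have hfst : l₁.map Sigma.fst = l₂.map Sigma.fst := by
    simpa [hw, hfst₂, IsReduced.toWord] using hfst₁.symm
  simpa using congrArg List.length hfst

theorem exists_eq_base_mul_prod (hφ : ∀ i, Function.Injective (φ i)) (g : PushoutI φ) :
    ∃ (h : H) (l : List (Σ i, G i)), IsReduced φ l ∧ g = base φ h * prod φ l := by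
  classical
  obtain ⟨d⟩ := NormalWord.transversal_nonempty φ hφ
  let w : NormalWord d := NormalWord.equiv g
  have hw : IsReduced φ w.toList := by
    refine ⟨w.chain_ne, fun ⟨i, a⟩ ha hmem => w.ne_one _ ha ?_⟩
    exact (d.compl i).eq_one_of_mem_of_mem (one_mem _) (d.one_mem i) hmem
      (w.normalized i a ha)
  refine ⟨w.head, w.toList, hw, ?_⟩
  rw [← hw.ofCoprodI_toWord_prod]
  exact (NormalWord.equiv.symm_apply_apply g).symm

theorem isReduced_append_invRev {q y : List (Σ i, G i)} {c : Σ i, G i}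
    (hq : IsReduced φ (q ++ [c])) (hy : IsCyclicallyReduced φ y)
    (hhead : ∀ a ∈ y.head?, c.1 ≠ a.1) (hlast : ∀ b ∈ y.getLast?, c.1 ≠ b.1) :
    IsReduced φ ((q ++ [c]) ++ y ++ invRev (q ++ [c])) := by
  refine isReduced_append.2 ⟨isReduced_append.2 ⟨hq, hy.toIsReduced, ?_⟩, hq.invRev, ?_⟩
  · simpa using hhead
  · rw [List.getLast?_append_of_ne_nil _ hy.ne_nil]
    simpa [eq_comm] using hlast

theorem isReduced_merge_invRev {q y : List (Σ i, G i)} {i : ι} {g a : G i}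
    (hq : IsReduced φ (q ++ [⟨i, g⟩])) (hy : IsCyclicallyReduced φ (⟨i, a⟩ :: y))
    (hga : g * a ∉ (φ i).range) (hlast : ∀ b ∈ (⟨i, a⟩ :: y).getLast?, i ≠ b.1) :
    IsReduced φ (q ++ ((⟨i, g * a⟩ :: y) ++ invRev (q ++ [⟨i, g⟩]))) := by
  obtain ⟨hq', -, hqi⟩ := isReduced_append.1 hq
  obtain ⟨-, hy', hiy⟩ := isReduced_cons.1 hy.toIsReduced
  have hy0 : y ≠ [] := by
    rintro rfl
    exact hy.head_ne_getLast _ rfl _ rfl rfl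
  refine isReduced_append.2 ⟨hq', isReduced_append.2 ⟨?_, hq.invRev, ?_⟩, ?_⟩
  · exact isReduced_cons.2 ⟨hga, hy', hiy⟩
  · rw [← List.singleton_append, List.getLast?_append_of_ne_nil _ hy0] at hlast ⊢
    simpa [eq_comm] using hlast
  · simpa using hqi

/-- When `g * a = φ i h`, this word represents the conjugate of `⟨i, a⟩ :: b :: y` by `g`. -/
theorem isCyclicallyReduced_rotate_absorb {i : ι} {a g : G i} {b : Σ i, G i}
    {y : List (Σ i, G i)} {h : H} (hy : IsCyclicallyReduced φ (⟨i, a⟩ :: b :: y))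
    (hg : g ∉ (φ i).range) :
    IsCyclicallyReduced φ ((⟨b.1, φ b.1 h * b.2⟩ :: y) ++ [⟨i, g⁻¹⟩]) := by
  obtain ⟨-, hby, hib⟩ := isReduced_cons.1 hy.toIsReduced
  obtain ⟨hb, hy', hby⟩ := isReduced_cons.1 hby
  have hlast := hy.head_ne_getLast _ rfl
  have hb' : φ b.1 h * b.2 ∉ (φ b.1).range := by
    rwa [mul_mem_cancel_left (MonoidHom.mem_range.2 ⟨h, rfl⟩)]
  have hg' : g⁻¹ ∉ (φ i).range := by rwa [inv_mem_iff]
  refine ⟨isReduced_append.2 ⟨isReduced_cons.2 ⟨hb', hy', hby⟩, isReduced_singleton.2 hg', ?_⟩,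
    by simp, ?_⟩
  · rcases List.eq_nil_or_concat y with rfl | ⟨l, e, rfl⟩
    · simpa [eq_comm] using hlast
    · simpa [List.getLast?_cons, List.getLast?_append, eq_comm] using hlast
  · simpa [List.getLast?_cons, List.getLast?_append, eq_comm] using hib

theorem exists_reduced_conj_append_singleton {q : List (Σ i, G i)} {c : Σ i, G i}
    (hq : IsReduced φ (q ++ [c]))
    (ih : ∀ y, IsCyclicallyReduced φ y → ∃ z, IsReduced φ z ∧
      prod φ z = prod φ q * prod φ y * (prod φ q)⁻¹ ∧ y.length ≤ z.length)
    {y : List (Σ i, G i)} (hy : IsCyclicallyReduced φ y) (hlast : ∀ b ∈ y.getLast?, c.1 ≠ b.1) :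
    ∃ z, IsReduced φ z ∧ prod φ z = prod φ (q ++ [c]) * prod φ y * (prod φ (q ++ [c]))⁻¹ ∧
      y.length ≤ z.length := by
  obtain ⟨j, g⟩ := c
  rcases y with _ | ⟨⟨i, a⟩, y⟩
  · exact absurd rfl hy.ne_nil
  by_cases hji : j = i
  swap
  · refine ⟨_, isReduced_append_invRev hq hy (by simpa using hji) hlast, ?_, by simp; omega⟩
    simp only [prod_append, prod_cons, prod_nil, mul_one, prod_invRev]
  subst hji
  by_cases hga : g * a ∈ (φ j).range
  · obtain ⟨h, hh⟩ := hga
    rcases y with _ | ⟨b, y⟩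
    · exact (hlast ⟨j, a⟩ rfl rfl).elim
    have hg : g ∉ (φ j).range := hq.not_mem_range ⟨j, g⟩ (by simp)
    obtain ⟨z, hz, hpz, hlz⟩ := ih _ (isCyclicallyReduced_rotate_absorb (h := h) hy hg)
    refine ⟨z, hz, ?_, by simpa using hlz⟩
    have hgh : of j g * of j a = base φ h := by rw [← map_mul, ← hh, of_apply_eq_base]
    simp only [hpz, prod_append, prod_cons, prod_nil, map_mul, map_inv, of_apply_eq_base]
    rw [← hgh]
    group
  · refine ⟨_, isReduced_merge_invRev hq hy hga hlast, ?_, by simp; omega⟩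
    simp only [prod_append, prod_cons, prod_nil, mul_one, prod_invRev, map_mul]
    group

theorem IsCyclicallyReduced.exists_reduced_conj {y : List (Σ i, G i)}
    (hy : IsCyclicallyReduced φ y) {q : List (Σ i, G i)} (hq : IsReduced φ q) :
    ∃ z, IsReduced φ z ∧ prod φ z = prod φ q * prod φ y * (prod φ q)⁻¹ ∧
      y.length ≤ z.length := by
  induction q using List.reverseRecOn generalizing y with
  | nil => exact ⟨y, hy.toIsReduced, by simp, le_rfl⟩
  | append_singleton q c ih =>
    have ih' := fun y (hy : IsCyclicallyReduced φ y) => ih hy (isReduced_append.1 hq).1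
    by_cases hlast : ∀ b ∈ y.getLast?, c.1 ≠ b.1
    · exact exists_reduced_conj_append_singleton hq ih' hy hlast
    · -- `c` lies in the factor of the last letter of `y`, hence not in that of the first one,
      -- which is the last letter of `invRev y`
      have hlast' : ∀ b ∈ (AmalgamatedProduct.invRev y).getLast?, c.1 ≠ b.1 := by
        simp only [not_forall, not_not] at hlast
        obtain ⟨b, hb, hcb⟩ := hlast
        simp only [AmalgamatedProduct.invRev, List.getLast?_reverse, List.head?_map,
          Option.mem_def, Option.map_eq_some_iff]
        rintro _ ⟨a, ha, rfl⟩
        rw [hcb]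
        exact (hy.head_ne_getLast a ha b hb).symm
      obtain ⟨z, hz, hpz, hlz⟩ := exists_reduced_conj_append_singleton hq ih' hy.invRev hlast'
      refine ⟨AmalgamatedProduct.invRev z, hz.invRev, ?_, by simpa using hlz⟩
      rw [prod_invRev, hpz, prod_invRev]
      group

theorem IsCyclicallyReduced.length_le_of_isConj (hφ : ∀ i, Function.Injective (φ i))
    {y z : List (Σ i, G i)} (hy : IsCyclicallyReduced φ y) (hz : IsReduced φ z)
    (hconj : IsConj (prod φ y) (prod φ z)) : y.length ≤ z.length := by
  obtain ⟨g, hg⟩ := isConj_iff.1 hconj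
  obtain ⟨h, q, hq, rfl⟩ := exists_eq_base_mul_prod hφ g
  obtain ⟨w, hw, hpw, hlw⟩ := hy.exists_reduced_conj hq
  have hpz : prod φ (conjBy φ h w) = prod φ z := by
    rw [prod_conjBy, hpw, ← hg]
    group
  have hlen := (hw.conjBy h).length_eq_of_prod_eq hφ hz hpz
  rw [length_conjBy] at hlen
  exact hlen ▸ hlw

end AmalgamatedProduct

open AmalgamatedProduct in
/-- In an amalgamated free product `G = A ∗_C B` (with `C` embedded in `A = G 0` and
`B = G 1` by injective homomorphisms), if `u, v, x ∈ A ∖ C` and `s, t ∈ B ∖ C`, then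
the element `[u, t v t⁻¹]` of `G` (a cyclically reduced word of length 8) is not
conjugate in `G` to `[s, x]` nor to `[s, x]⁻¹` (cyclically reduced words of length 4). -/
theorem statement11 {C : Type*} [Group C] {G : Fin 2 → Type*} [∀ i, Group (G i)]
    (φ : ∀ i, C →* G i) (hφ : ∀ i, Function.Injective (φ i))
    (u v x : G 0) (hu : u ∉ (φ 0).range) (hv : v ∉ (φ 0).range) (hx : x ∉ (φ 0).range)
    (s t : G 1) (hs : s ∉ (φ 1).range) (ht : t ∉ (φ 1).range) :
    ¬ IsConj
        ⁅PushoutI.of (φ := φ) 0 u,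
          PushoutI.of (φ := φ) 1 t * PushoutI.of (φ := φ) 0 v *
            (PushoutI.of (φ := φ) 1 t)⁻¹⁆
        ⁅PushoutI.of (φ := φ) 1 s, PushoutI.of (φ := φ) 0 x⁆ ∧
    ¬ IsConj
        ⁅PushoutI.of (φ := φ) 0 u,
          PushoutI.of (φ := φ) 1 t * PushoutI.of (φ := φ) 0 v *
            (PushoutI.of (φ := φ) 1 t)⁻¹⁆
        ⁅PushoutI.of (φ := φ) 1 s, PushoutI.of (φ := φ) 0 x⁆⁻¹ := by
  let y : List (Σ i, G i) :=
    [⟨0, u⟩, ⟨1, t⟩, ⟨0, v⟩, ⟨1, t⁻¹⟩, ⟨0, u⁻¹⟩, ⟨1, t⟩, ⟨0, v⁻¹⟩, ⟨1, t⁻¹⟩]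
  let z : List (Σ i, G i) := [⟨1, s⟩, ⟨0, x⟩, ⟨1, s⁻¹⟩, ⟨0, x⁻¹⟩]
  have hy : IsCyclicallyReduced φ y :=
    ⟨⟨by simp [y], by simp [y, hu, hv, ht, -MonoidHom.mem_range]⟩, by simp [y], by simp [y]⟩
  have hz : IsReduced φ z := ⟨by simp [z], by simp [z, hs, hx, -MonoidHom.mem_range]⟩
  have hpy : ⁅PushoutI.of (φ := φ) 0 u,
      PushoutI.of (φ := φ) 1 t * PushoutI.of (φ := φ) 0 v * (PushoutI.of (φ := φ) 1 t)⁻¹⁆ =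
        prod φ y := by
    simp only [y, commutatorElement_def, prod_cons, prod_nil, map_inv, mul_one]
    group
  have hpz : ⁅PushoutI.of (φ := φ) 1 s, PushoutI.of (φ := φ) 0 x⁆ = prod φ z := by
    simp only [z, commutatorElement_def, prod_cons, prod_nil, map_inv, mul_one]
    group
  rw [hpy, hpz, ← prod_invRev]
  refine ⟨fun h => ?_, fun h => ?_⟩
  · simpa [y, z] using hy.length_le_of_isConj hφ hz h
  · simpa [y, z] using hy.length_le_of_isConj hφ hz.invRev h
end
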